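/- arXiv:2202.00793 — 2 statements merged into one kernel-verified Lean document; each statement's English description precedes it below -/
import Mathlib

section
/- Let {X_t} be a stationary process with autocovariance γ(k) = C ℓ(k) k^{2d−1} where 0 < d < 1/2, C > 0, and ℓ is slowly varying with ℓ(k) → (2d+1)/(4d). Then var(Σ_{t=1}^{n} X_t) ∼ C ℓ(n) n^{2d+1} / (d(2d+1)) as n → ∞. -/
/-!
By stationarity, `var(X_1 + ⋯ + X_n) = ∑_{m<n} (v + 2 Γ(m))` with `v = var X_0` and
`Γ(m) = γ(1) + ⋯ + γ(m)`. Partial sums of a sequence equivalent to `c k^p`, `p > -1`, are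
equivalent to `c n^(p+1) / (p+1)`: compare with the telescoping increments
`(k+1)^(p+1) - k^(p+1) ∼ (p+1) k^p`. Applied twice, with `L = lim ℓ`, this gives
`Γ(m) ∼ C L m^(2d) / (2d)` (the constant `v` is negligible against it) and then
`var(X_1 + ⋯ + X_n) ∼ C L n^(2d+1) / (d (2d+1)) ∼ C ℓ(n) n^(2d+1) / (d (2d+1))`.
-/

open MeasureTheory ProbabilityTheory Real Filter

/-- Covariance of two real random variables. -/
noncomputable def covar {Ω : Type*} [MeasurableSpace Ω] (μ : Measure Ω) (X Y : Ω → ℝ) : ℝ :=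
  ∫ ω, X ω * Y ω ∂μ - (∫ ω, X ω ∂μ) * (∫ ω, Y ω ∂μ)

open Asymptotics Finset Topology

theorem Asymptotics.IsEquivalent.sum_range_const_mul {a g : ℕ → ℝ} {c : ℝ} (hc : c ≠ 0)
    (h : a ~[atTop] fun k => c * g k) (hg : 0 ≤ g)
    (hsum : Tendsto (fun n => ∑ k ∈ range n, g k) atTop atTop) :
    (fun n => ∑ k ∈ range n, a k) ~[atTop] fun n => c * ∑ k ∈ range n, g k := by
  have hsmall : (fun k => a k - c * g k) =o[atTop] g :=
    h.isLittleO.trans_isBigO (isBigO_const_mul_self c g atTop)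
  refine IsLittleO.isEquivalent ?_
  simp only [Pi.sub_def, mul_sum, ← sum_sub_distrib]
  have hbig : (fun n => ∑ k ∈ range n, g k) =O[atTop] fun n => ∑ k ∈ range n, c * g k := by
    simpa only [mul_sum] using isBigO_self_const_mul hc (fun n => ∑ k ∈ range n, g k) atTop
  exact (hsmall.sum_range hg hsum).trans_isBigO hbig

theorem isEquivalent_one_add_rpow_sub_one {q : ℝ} (hq : q ≠ 0) :
    (fun h : ℝ => (1 + h) ^ q - 1) ~[𝓝 0] fun h => q * h := by
  have hderiv : HasDerivAt (fun h : ℝ => (1 + h) ^ q) q 0 := by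
    simpa using ((hasDerivAt_id (0:ℝ)).const_add 1).rpow_const (p := q) (Or.inl (by norm_num))
  refine IsLittleO.isEquivalent ?_
  simp only [Pi.sub_def]
  simpa [mul_comm] using
    (hasDerivAt_iff_isLittleO_nhds_zero.1 hderiv).trans_isBigO (isBigO_self_const_mul hq _ _)

theorem isEquivalent_rpow_succ_sub_rpow {q : ℝ} (hq : q ≠ 0) :
    (fun k : ℕ => ((k : ℝ) + 1) ^ q - (k : ℝ) ^ q) ~[atTop] fun k => q * (k : ℝ) ^ (q - 1) := by
  have hinv : Tendsto (fun k : ℕ => (k : ℝ)⁻¹) atTop (𝓝 0) :=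
    tendsto_inv_atTop_zero.comp tendsto_natCast_atTop_atTop
  have := (IsEquivalent.refl (u := fun k : ℕ => (k : ℝ) ^ q)).mul
    ((isEquivalent_one_add_rpow_sub_one hq).comp_tendsto hinv)
  refine (this.congr_left ?_).congr_right ?_
  all_goals
    filter_upwards [eventually_gt_atTop 0] with k hk
    have hk' : (0 : ℝ) < k := by exact_mod_cast hk
    simp only [Pi.mul_apply, Function.comp_apply]
  · rw [mul_sub, mul_one, ← mul_rpow hk'.le (by positivity), mul_add, mul_inv_cancel₀ hk'.ne',
      mul_one]
  · rw [rpow_sub_one hk'.ne']; ring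

theorem tendsto_natCast_rpow_atTop {q : ℝ} (hq : 0 < q) :
    Tendsto (fun n : ℕ => (n : ℝ) ^ q) atTop atTop :=
  (tendsto_rpow_atTop hq).comp tendsto_natCast_atTop_atTop

theorem isEquivalent_sum_range_rpow {p : ℝ} (hp : -1 < p) :
    (fun n => ∑ k ∈ range n, (k : ℝ) ^ p) ~[atTop] fun n => (p + 1)⁻¹ * (n : ℝ) ^ (p + 1) := by
  have hq : 0 < p + 1 := by linarith
  set incr : ℕ → ℝ := fun k => ((k : ℝ) + 1) ^ (p + 1) - (k : ℝ) ^ (p + 1)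
  have htel : ∀ n, ∑ k ∈ range n, incr k = (n : ℝ) ^ (p + 1) := fun n => by
    simpa [incr, zero_rpow hq.ne'] using sum_range_sub (fun k => (k : ℝ) ^ (p + 1)) n
  have hequiv : (fun k : ℕ => (k : ℝ) ^ p) ~[atTop] fun k => (p + 1)⁻¹ * incr k := by
    refine (IsEquivalent.refl.mul (isEquivalent_rpow_succ_sub_rpow hq.ne').symm).congr_left ?_
    filter_upwards with k
    simp [inv_mul_cancel_left₀ hq.ne']
  have hincr : 0 ≤ incr := fun k => sub_nonneg.2 (rpow_le_rpow (by positivity) (by linarith) hq.le)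
  simpa only [htel] using hequiv.sum_range_const_mul (inv_ne_zero hq.ne') hincr
    (by simpa only [htel] using tendsto_natCast_rpow_atTop hq)

theorem isEquivalent_sum_range_of_isEquivalent_const_mul_rpow {p c : ℝ} (hp : -1 < p) (hc : c ≠ 0)
    {a : ℕ → ℝ} (ha : a ~[atTop] fun k => c * (k : ℝ) ^ p) :
    (fun n => ∑ k ∈ range n, a k) ~[atTop] fun n => c * (p + 1)⁻¹ * (n : ℝ) ^ (p + 1) := by
  have hsum := isEquivalent_sum_range_rpow hp
  have hdiverge : Tendsto (fun n => ∑ k ∈ range n, (k : ℝ) ^ p) atTop atTop :=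
    hsum.symm.tendsto_atTop <|
      (tendsto_natCast_rpow_atTop (by linarith)).const_mul_atTop (inv_pos.2 (by linarith))
  have hconst : (fun n => c * ∑ k ∈ range n, (k : ℝ) ^ p) ~[atTop]
      fun n => c * (p + 1)⁻¹ * (n : ℝ) ^ (p + 1) := by
    simpa only [Pi.mul_def, mul_assoc] using (IsEquivalent.refl (u := fun _ : ℕ => c)).mul hsum
  exact (ha.sum_range_const_mul hc (fun k => by positivity) hdiverge).trans hconst

theorem isEquivalent_natCast_add_one_rpow (p : ℝ) :
    (fun k : ℕ => ((k : ℝ) + 1) ^ p) ~[atTop] fun k => (k : ℝ) ^ p := by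
  have hnorm : Tendsto (norm ∘ fun k : ℕ => (k : ℝ)) atTop atTop :=
    tendsto_norm_atTop_atTop.comp tendsto_natCast_atTop_atTop
  exact (IsEquivalent.refl.add_const_of_norm_tendsto_atTop hnorm).rpow (fun k => Nat.cast_nonneg k)

theorem Filter.Tendsto.isEquivalent_const_mul_mul {α : Type*} {l : Filter α} {ℓ f : α → ℝ}
    {L : ℝ} (hℓ : Tendsto ℓ l (𝓝 L)) (hL : L ≠ 0) (c : ℝ) :
    (fun x => c * ℓ x * f x) ~[l] fun x => c * L * f x :=
  (IsEquivalent.refl.mul ((isEquivalent_const_iff_tendsto hL).2 hℓ)).mul IsEquivalent.refl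

/-- In the paper's notation `partialSumVariance v γ n = n v + 2 ∑_{k=1}^{n-1} (n - k) γ(k)`. -/
noncomputable def partialSumVariance (v : ℝ) (γ : ℕ → ℝ) (n : ℕ) : ℝ :=
  ∑ m ∈ range n, (v + 2 * ∑ k ∈ range m, γ (k + 1))

theorem sum_range_sum_range_eq_partialSumVariance {c : ℕ → ℕ → ℝ} {v : ℝ} {γ : ℕ → ℝ}
    (hdiag : ∀ i, c i i = v) (hoff : ∀ i j, i ≠ j → c i j = γ (max i j - min i j)) (n : ℕ) :
    ∑ i ∈ range n, ∑ j ∈ range n, c i j = partialSumVariance v γ n := by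
  induction n with
  | zero => simp [partialSumVariance]
  | succ n ih =>
    have hreflect : ∑ i ∈ range n, γ (n - i) = ∑ k ∈ range n, γ (k + 1) := by
      rw [← sum_range_reflect]
      exact sum_congr rfl fun k hk => by congr 1; have := mem_range.1 hk; omega
    have hcol : ∑ i ∈ range n, c i n = ∑ k ∈ range n, γ (k + 1) := by
      rw [← hreflect]
      exact sum_congr rfl fun i hi => by
        rw [hoff i n (mem_range.1 hi).ne]; congr 1; have := mem_range.1 hi; omega
    have hrow : ∑ j ∈ range n, c n j = ∑ k ∈ range n, γ (k + 1) := by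
      rw [← hreflect]
      exact sum_congr rfl fun j hj => by
        rw [hoff n j (mem_range.1 hj).ne']; congr 1; have := mem_range.1 hj; omega
    simp only [partialSumVariance, sum_range_succ, sum_add_distrib, hcol, hrow, hdiag] at ih ⊢
    rw [ih]
    ring

theorem isEquivalent_partialSumVariance {γ : ℕ → ℝ} {c q : ℝ} (v : ℝ) (hq : 0 < q) (hc : c ≠ 0)
    (hγ : (fun k => γ (k + 1)) ~[atTop] fun k => c * (k : ℝ) ^ (q - 1)) :
    partialSumVariance v γ ~[atTop] fun n => 2 * c * (q * (q + 1))⁻¹ * (n : ℝ) ^ (q + 1) := by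
  have hpartial := isEquivalent_sum_range_of_isEquivalent_const_mul_rpow (by linarith) hc hγ
  rw [sub_add_cancel] at hpartial
  have hc' : 2 * c * q⁻¹ ≠ 0 := by positivity
  have hincr : (fun m => v + 2 * ∑ k ∈ range m, γ (k + 1)) ~[atTop]
      fun m => 2 * c * q⁻¹ * (m : ℝ) ^ q := by
    have htwice : (fun m => 2 * ∑ k ∈ range m, γ (k + 1)) ~[atTop]
        fun m => 2 * c * q⁻¹ * (m : ℝ) ^ q := by
      simpa only [Pi.mul_def, mul_assoc] using (IsEquivalent.refl (u := fun _ : ℕ => (2 : ℝ))).mul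
        hpartial
    have hconst : (fun _ : ℕ => v) =o[atTop] fun m => 2 * c * q⁻¹ * (m : ℝ) ^ q :=
      (isLittleO_const_left.2 <| .inr <| tendsto_norm_atTop_atTop.comp
        (tendsto_natCast_rpow_atTop hq)).trans_isBigO (isBigO_self_const_mul hc' _ _)
    exact hconst.add_isEquivalent htwice
  exact (isEquivalent_sum_range_of_isEquivalent_const_mul_rpow (by linarith) hc' hincr).congr_right
    (.of_forall fun n => by rw [mul_inv]; ring)

theorem covar_eq_covariance {Ω : Type*} [MeasurableSpace Ω] {μ : Measure Ω} [IsProbabilityMeasure μ]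
    {X Y : Ω → ℝ} (hX : MemLp X 2 μ) (hY : MemLp Y 2 μ) : covar μ X Y = cov[X, Y; μ] := by
  rw [covariance_eq_sub hX hY]
  rfl

theorem covar_sum_sum {Ω ι : Type*} [MeasurableSpace Ω] {μ : Measure Ω} [IsProbabilityMeasure μ]
    {X : ι → Ω → ℝ} (hX : ∀ i, MemLp (X i) 2 μ) (s : Finset ι) :
    covar μ (fun ω => ∑ i ∈ s, X i ω) (fun ω => ∑ i ∈ s, X i ω)
      = ∑ i ∈ s, ∑ j ∈ s, covar μ (X i) (X j) := by
  have hsum : MemLp (fun ω => ∑ i ∈ s, X i ω) 2 μ := memLp_finsetSum s fun i _ => hX i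
  rw [covar_eq_covariance hsum hsum,
    covariance_fun_sum_fun_sum' (fun i _ => hX i) (fun i _ => hX i)]
  exact sum_congr rfl fun i _ => sum_congr rfl fun j _ => (covar_eq_covariance (hX i) (hX j)).symm

theorem sum_Icc_one_eq_sum_range {M : Type*} [AddCommMonoid M] (f : ℕ → M) (n : ℕ) :
    ∑ t ∈ Icc 1 n, f t = ∑ i ∈ range n, f (i + 1) := by
  rw [← Ico_add_one_right_eq_Icc, sum_Ico_eq_sum_range]
  simp only [add_tsub_cancel_right, add_comm]

theorem covar_sum_Icc_eq_partialSumVariance {Ω : Type*} [MeasurableSpace Ω] {μ : Measure Ω}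
    [IsProbabilityMeasure μ] {X : ℕ → Ω → ℝ} {γ : ℕ → ℝ} (hL2 : ∀ t, MemLp (X t) 2 μ)
    (hcov : ∀ s t : ℕ, s ≠ t → covar μ (X s) (X t) = γ (max s t - min s t))
    (hvar : ∀ t : ℕ, covar μ (X t) (X t) = covar μ (X 0) (X 0)) (n : ℕ) :
    covar μ (fun ω => ∑ t ∈ Icc 1 n, X t ω) (fun ω => ∑ t ∈ Icc 1 n, X t ω)
      = partialSumVariance (covar μ (X 0) (X 0)) γ n := by
  simp only [sum_Icc_one_eq_sum_range, covar_sum_sum (fun i => hL2 (i + 1))]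
  refine sum_range_sum_range_eq_partialSumVariance (fun i => hvar _) (fun i j hij => ?_) n
  rw [hcov _ _ (by omega)]
  congr 1
  omega

theorem variance_partial_sum_longmemory_general
    {Ω : Type*} [MeasurableSpace Ω] (μ : Measure Ω) [IsProbabilityMeasure μ]
    (X : ℕ → Ω → ℝ) (C d : ℝ) (hd1 : 0 < d) (hC : 0 < C)
    (ℓ : ℕ → ℝ) (hℓ : Tendsto ℓ atTop (nhds ((2*d+1)/(4*d))))
    (hL2 : ∀ t, MemLp (X t) 2 μ)
    (γ : ℕ → ℝ)
    (hγ : ∀ k : ℕ, 1 ≤ k → γ k = C * ℓ k * (k : ℝ) ^ (2*d - 1))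
    (hcov : ∀ s t : ℕ, s ≠ t → covar μ (X s) (X t) = γ (max s t - min s t))
    (hvar : ∀ t : ℕ, covar μ (X t) (X t) = covar μ (X 0) (X 0)) :
    Tendsto (fun n : ℕ =>
        covar μ (fun ω => ∑ t ∈ Finset.Icc 1 n, X t ω)
                (fun ω => ∑ t ∈ Finset.Icc 1 n, X t ω)
          / (C * ℓ n * (n : ℝ) ^ (2*d + 1) / (d * (2*d + 1))))
      atTop (nhds 1) := by
  set L := (2*d+1)/(4*d)
  have hL : 0 < L := by positivity
  have hγ_equiv : (fun k => γ (k + 1)) ~[atTop] fun k => C * L * (k : ℝ) ^ (2*d - 1) := by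
    refine ((hℓ.comp (tendsto_add_atTop_nat 1)).isEquivalent_const_mul_mul hL.ne' C).trans
      (IsEquivalent.refl.mul (isEquivalent_natCast_add_one_rpow _)) |>.congr_left ?_
    filter_upwards with k
    simp [hγ (k + 1) (by omega)]
  have hnormalizer : (fun n : ℕ => C * ℓ n * (n : ℝ) ^ (2*d + 1) / (d * (2*d + 1))) ~[atTop]
      fun n => 2 * (C * L) * (2*d * (2*d + 1))⁻¹ * (n : ℝ) ^ (2*d + 1) := by
    refine ((hℓ.isEquivalent_const_mul_mul hL.ne' (C / (d * (2*d + 1)))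
      (f := fun n : ℕ => (n : ℝ) ^ (2*d + 1))).congr_left ?_).congr_right ?_
    all_goals filter_upwards with n
    · ring
    · field_simp
  have hnormalizer_ne : ∀ᶠ n : ℕ in atTop, C * ℓ n * (n : ℝ) ^ (2*d + 1) / (d * (2*d + 1)) ≠ 0 := by
    filter_upwards [hℓ.eventually_const_lt hL, eventually_gt_atTop 0] with n hℓn hn
    have : (0 : ℝ) < n := by exact_mod_cast hn
    positivity
  simp only [covar_sum_Icc_eq_partialSumVariance hL2 hcov hvar]
  exact (isEquivalent_iff_tendsto_one hnormalizer_ne).1 <|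
    (isEquivalent_partialSumVariance _ (by positivity) (by positivity) hγ_equiv).trans
      hnormalizer.symm

/-- If `{X_t}` is stationary with autocovariance
`γ(k) = C ℓ(k) k^{2d-1}` for `k ≥ 1`, where `0 < d < 1/2`, `C > 0` and `ℓ` is slowly
varying with `ℓ(k) → (2d+1)/(4d)`, then
`var(Σ_{t=1}^n X_t) ∼ C ℓ(n) n^{2d+1} / (d(2d+1))` as `n → ∞`. -/
theorem variance_partial_sum_longmemory
    {Ω : Type*} [MeasurableSpace Ω] (μ : Measure Ω) [IsProbabilityMeasure μ]
    (X : ℕ → Ω → ℝ) (C d : ℝ) (hd1 : 0 < d) (hd2 : d < 1/2) (hC : 0 < C)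
    (ℓ : ℕ → ℝ) (hℓ : Tendsto ℓ atTop (nhds ((2*d+1)/(4*d))))
    (hL2 : ∀ t, MemLp (X t) 2 μ)
    (γ : ℕ → ℝ)
    (hγ : ∀ k : ℕ, 1 ≤ k → γ k = C * ℓ k * (k : ℝ) ^ (2*d - 1))
    (hcov : ∀ s t : ℕ, s ≠ t → covar μ (X s) (X t) = γ (max s t - min s t))
    (hvar : ∀ t : ℕ, covar μ (X t) (X t) = covar μ (X 0) (X 0)) :
    Tendsto (fun n : ℕ =>
        covar μ (fun ω => ∑ t ∈ Finset.Icc 1 n, X t ω)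
                (fun ω => ∑ t ∈ Finset.Icc 1 n, X t ω)
          / (C * ℓ n * (n : ℝ) ^ (2*d + 1) / (d * (2*d + 1))))
      atTop (nhds 1) :=
  variance_partial_sum_longmemory_general μ X C d hd1 hC ℓ hℓ hL2 γ hγ hcov hvar
end

section
/- Let γ_c(k) = C ℓ(k) k^{2d−1} with 0 < d < 1/2, C > 0, ℓ slowly varying with limit (2d+1)/(4d), and define S(H) = Σ_{k=1}^{Hm} k γ_c(k) + Σ_{k=Hm+1}^{2Hm−1} (2Hm − k) γ_c(k) for positive integers H, m. Then S(H) ∼ C ℓ(Hm) (Hm)^{2d+1} (2^{2d} − 1) / (d(2d+1)) as H → ∞. -/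
/-!
With `n = Hm` and `G₀`, `G₁` the partial sums of `γ_c(k)` and `k γ_c(k)`, splitting the sum at `n`
gives `S = 2n (G₀(2n-1) - G₀(n)) - G₁(2n-1) + 2 G₁(n)`. Comparing `ℓ(k) k^α` with the telescoping
increments `(k+1)^(α+1) - k^(α+1)` in a Stolz–Cesàro argument gives
`∑_{k ≤ n} ℓ(k) k^α ∼ L n^(α+1) / (α+1)` for every `α > -1`. Inserting this for `α = 2d` and
`α = 2d - 1`, at `n` and at `2n - 1 ∼ 2n`, yields `S ∼ C L n^(2d+1) (2^(2d) - 1) / (d (2d+1))`,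
and since `L ≠ 0` the constant `L` may be replaced by `ℓ(n)`.
-/

open Real Filter Finset Asymptotics Topology

theorem tendsto_sum_range_div_sum_range_of_tendsto_div {f g : ℕ → ℝ} {L : ℝ}
    (hg : ∀ k, 0 < g k) (hsum : Tendsto (fun n ↦ ∑ k ∈ range n, g k) atTop atTop)
    (hfg : Tendsto (fun k ↦ f k / g k) atTop (𝓝 L)) :
    Tendsto (fun n ↦ (∑ k ∈ range n, f k) / ∑ k ∈ range n, g k) atTop (𝓝 L) := by
  have hlo : (fun k ↦ f k - L * g k) =o[atTop] g := by
    rw [isLittleO_iff_tendsto' (.of_forall fun k hk ↦ absurd hk (hg k).ne')]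
    refine (tendsto_sub_nhds_zero_iff.2 hfg).congr fun k ↦ ?_
    field_simp [(hg k).ne']
  have hsum_lo := (hlo.sum_range (fun k ↦ (hg k).le) hsum).tendsto_div_nhds_zero
  refine tendsto_sub_nhds_zero_iff.1 (hsum_lo.congr' ?_)
  filter_upwards [hsum.eventually_gt_atTop 0] with n hn
  rw [sum_sub_distrib, ← mul_sum]
  field_simp

theorem tendsto_succ_rpow_sub_rpow_div (β : ℝ) :
    Tendsto (fun k : ℕ ↦ (((k : ℝ) + 1) ^ β - (k : ℝ) ^ β) / ((k : ℝ) + 1) ^ (β - 1))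
      atTop (𝓝 β) := by
  -- the quotient is minus the slope of `x ↦ (1 - x) ^ β` between `0` and `1 / (k + 1)`
  have hderiv : HasDerivAt (fun x : ℝ ↦ (1 - x) ^ β) (-β) 0 := by
    simpa using ((hasDerivAt_id (0 : ℝ)).const_sub 1).rpow_const (p := β) (by simp)
  have hh : Tendsto (fun k : ℕ ↦ ((k : ℝ) + 1)⁻¹) atTop (𝓝[≠] 0) :=
    tendsto_nhdsWithin_iff.2 ⟨by simpa using tendsto_one_div_add_atTop_nhds_zero_nat (𝕜 := ℝ),
      .of_forall fun k ↦ by simp only [Set.mem_compl_iff, Set.mem_singleton_iff]; positivity⟩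
  have hlim := (hderiv.tendsto_slope_zero.comp hh).neg
  rw [neg_neg] at hlim
  refine hlim.congr fun k ↦ ?_
  have hk : (0 : ℝ) < k + 1 := by positivity
  have hsplit : ((k : ℝ) + 1) ^ β = ((k : ℝ) + 1) ^ (β - 1) * (k + 1) := by
    rw [← rpow_add_one hk.ne', sub_add_cancel]
  have hratio : 1 - ((k : ℝ) + 1)⁻¹ = k / (k + 1) := by field_simp; ring
  simp only [Function.comp_apply, zero_add, sub_zero, one_rpow, smul_eq_mul, hratio,
    div_rpow k.cast_nonneg hk.le]
  rw [hsplit]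
  field_simp
  ring

theorem sum_Icc_one_eq_sum_range_succ {M : Type*} [AddCommMonoid M] (f : ℕ → M) (n : ℕ) :
    ∑ k ∈ Icc 1 n, f k = ∑ k ∈ range n, f (k + 1) := by
  rw [range_eq_Ico, sum_Ico_add' f 0 n 1, zero_add, Ico_add_one_right_eq_Icc]

theorem tendsto_sum_Icc_mul_rpow_div_rpow {ℓ : ℕ → ℝ} {L α : ℝ} (hα : -1 < α)
    (hℓ : Tendsto ℓ atTop (𝓝 L)) :
    Tendsto (fun n : ℕ ↦ (∑ k ∈ Icc 1 n, ℓ k * (k : ℝ) ^ α) / (n : ℝ) ^ (α + 1))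
      atTop (𝓝 (L / (α + 1))) := by
  have hβ : 0 < α + 1 := by linarith
  set g : ℕ → ℝ := fun k ↦ ((k : ℝ) + 1) ^ (α + 1) - (k : ℝ) ^ (α + 1)
  have hg : ∀ k, 0 < g k := fun k ↦
    sub_pos.2 (rpow_lt_rpow k.cast_nonneg (lt_add_one _) hβ)
  have htelescope : ∀ n, ∑ k ∈ range n, g k = (n : ℝ) ^ (α + 1) := fun n ↦ by
    simpa [g, zero_rpow hβ.ne'] using sum_range_sub (fun k : ℕ ↦ (k : ℝ) ^ (α + 1)) n
  have hratio : Tendsto (fun k ↦ ℓ (k + 1) * ((k : ℝ) + 1) ^ α / g k) atTop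
      (𝓝 (L / (α + 1))) := by
    refine ((hℓ.comp (tendsto_add_atTop_nat 1)).div
      (tendsto_succ_rpow_sub_rpow_div (α + 1)) hβ.ne').congr fun k ↦ ?_
    simp only [Pi.div_apply, Function.comp_apply, add_sub_cancel_right, g]
    field_simp
  have hstolz := tendsto_sum_range_div_sum_range_of_tendsto_div hg
    (by simpa only [htelescope, Function.comp_def] using
      (tendsto_rpow_atTop hβ).comp tendsto_natCast_atTop_atTop) hratio
  simp only [htelescope] at hstolz
  refine hstolz.congr fun n ↦ ?_
  rw [sum_Icc_one_eq_sum_range_succ]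
  push_cast
  rfl

theorem tendsto_comp_div_rpow {F : ℕ → ℝ} {u : ℕ → ℕ} {β c r : ℝ}
    (hF : Tendsto (fun n : ℕ ↦ F n / (n : ℝ) ^ β) atTop (𝓝 c)) (hu : Tendsto u atTop atTop)
    (hr : Tendsto (fun n ↦ (u n : ℝ) / n) atTop (𝓝 r)) (hr0 : 0 < r) :
    Tendsto (fun n ↦ F (u n) / (n : ℝ) ^ β) atTop (𝓝 (r ^ β * c)) := by
  refine ((hr.rpow_const (.inl hr0.ne')).mul (hF.comp hu)).congr' ?_
  filter_upwards [hu.eventually_gt_atTop 0, eventually_gt_atTop 0] with n hun hn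
  have hun' : (0 : ℝ) < u n := by exact_mod_cast hun
  have hn' : (0 : ℝ) < n := by exact_mod_cast hn
  simp only [Function.comp_apply, div_rpow hun'.le hn'.le]
  field_simp [(rpow_pos_of_pos hun' β).ne']

theorem tendsto_two_mul_sub_one_div :
    Tendsto (fun n : ℕ ↦ ((2 * n - 1 : ℕ) : ℝ) / n) atTop (𝓝 2) := by
  have h : Tendsto (fun n : ℕ ↦ 2 - (n : ℝ)⁻¹) atTop (𝓝 2) := by
    simpa using tendsto_const_nhds.sub (tendsto_inv_atTop_nhds_zero_nat (𝕜 := ℝ))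
  refine h.congr' ?_
  filter_upwards [eventually_gt_atTop 0] with n hn
  rw [Nat.cast_sub (by omega)]
  push_cast
  field_simp

/-- The paper's `S(H)`, written as a function of `n = Hm`. -/
def triangleSum (γ : ℕ → ℝ) (n : ℕ) : ℝ :=
  (∑ k ∈ Icc 1 n, (k : ℝ) * γ k) + ∑ k ∈ Icc (n + 1) (2 * n - 1), ((2 * n : ℕ) - (k : ℝ)) * γ k

theorem triangleSum_eq (γ : ℕ → ℝ) (n : ℕ) :
    triangleSum γ n = 2 * n * (∑ k ∈ Icc 1 (2 * n - 1), γ k - ∑ k ∈ Icc 1 n, γ k)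
      - ∑ k ∈ Icc 1 (2 * n - 1), (k : ℝ) * γ k + 2 * ∑ k ∈ Icc 1 n, (k : ℝ) * γ k := by
  have hsplit : ∀ u : ℕ → ℝ, ∑ k ∈ Icc 1 (2 * n - 1), u k
      = ∑ k ∈ Icc 1 n, u k + ∑ k ∈ Icc (n + 1) (2 * n - 1), u k := fun u ↦ by
    have hIoc (b : ℕ) : Icc 1 b = Ioc 0 b := Icc_add_one_left_eq_Ioc 0 b
    rw [hIoc, hIoc, Icc_add_one_left_eq_Ioc, sum_Ioc_consecutive u n.zero_le (by omega)]
  rw [triangleSum, hsplit, hsplit, Nat.cast_mul, Nat.cast_ofNat]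
  simp only [sub_mul, sum_sub_distrib, ← mul_sum, mul_assoc]
  ring

theorem tendsto_triangleSum_div_rpow {γ ℓ : ℕ → ℝ} {C L d : ℝ} (hd : 0 < d)
    (hℓ : Tendsto ℓ atTop (𝓝 L)) (hγ : ∀ k, 1 ≤ k → γ k = C * ℓ k * (k : ℝ) ^ (2 * d - 1)) :
    Tendsto (fun n : ℕ ↦ triangleSum γ n / (n : ℝ) ^ (2 * d + 1)) atTop
      (𝓝 (C * L * (2 ^ (2 * d) - 1) / (d * (2 * d + 1)))) := by
  set G₀ : ℕ → ℝ := fun n ↦ ∑ k ∈ Icc 1 n, γ k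
  set G₁ : ℕ → ℝ := fun n ↦ ∑ k ∈ Icc 1 n, (k : ℝ) * γ k
  have hG₀ : Tendsto (fun n : ℕ ↦ G₀ n / (n : ℝ) ^ (2 * d)) atTop (𝓝 (C * L / (2 * d))) := by
    have h := tendsto_sum_Icc_mul_rpow_div_rpow (α := 2 * d - 1) (by linarith) (hℓ.const_mul C)
    rw [sub_add_cancel] at h
    refine h.congr fun n ↦ congrArg (· / _) (sum_congr rfl fun k hk ↦ ?_)
    rw [hγ k (mem_Icc.1 hk).1]
  have hG₁ : Tendsto (fun n : ℕ ↦ G₁ n / (n : ℝ) ^ (2 * d + 1)) atTop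
      (𝓝 (C * L / (2 * d + 1))) := by
    refine (tendsto_sum_Icc_mul_rpow_div_rpow (α := 2 * d) (by linarith)
      (hℓ.const_mul C)).congr fun n ↦ congrArg (· / _) (sum_congr rfl fun k hk ↦ ?_)
    have hk₁ := (mem_Icc.1 hk).1
    have hk₀ : (k : ℝ) ≠ 0 := by positivity
    rw [hγ k hk₁, rpow_sub_one hk₀]
    field_simp
  have hdouble {F : ℕ → ℝ} {β c : ℝ} (hF : Tendsto (fun n : ℕ ↦ F n / (n : ℝ) ^ β) atTop (𝓝 c)) :=
    tendsto_comp_div_rpow hF (tendsto_atTop_mono (fun n ↦ (by omega : n ≤ 2 * n - 1)) tendsto_id)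
      tendsto_two_mul_sub_one_div two_pos
  have hlim := (((hdouble hG₀).sub hG₀).const_mul 2).sub (hdouble hG₁) |>.add (hG₁.const_mul 2)
  have hvalue : 2 * (2 ^ (2 * d) * (C * L / (2 * d)) - C * L / (2 * d))
      - 2 ^ (2 * d + 1) * (C * L / (2 * d + 1)) + 2 * (C * L / (2 * d + 1))
      = C * L * (2 ^ (2 * d) - 1) / (d * (2 * d + 1)) := by
    rw [rpow_add_one two_ne_zero]
    field_simp
    ring
  rw [hvalue] at hlim
  refine hlim.congr' ?_
  filter_upwards [eventually_gt_atTop 0] with n hn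
  have hn' : (0 : ℝ) < n := by exact_mod_cast hn
  rw [triangleSum_eq, rpow_add_one hn'.ne']
  field_simp [(rpow_pos_of_pos hn' (2 * d)).ne']
  ring

theorem aggregated_cross_covariance_asymptotic_general
    (C d : ℝ) (hd1 : 0 < d) (hC : 0 < C)
    (m : ℕ) (hm : 0 < m)
    (ℓ : ℕ → ℝ) (hℓ : Tendsto ℓ atTop (nhds ((2*d+1)/(4*d))))
    (γc : ℕ → ℝ)
    (hγ : ∀ k : ℕ, 1 ≤ k → γc k = C * ℓ k * (k : ℝ) ^ (2*d - 1)) :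
    Tendsto (fun H : ℕ =>
        ((∑ k ∈ Finset.Icc 1 (H*m), (k : ℝ) * γc k)
          + ∑ k ∈ Finset.Icc (H*m+1) (2*H*m-1), ((2*H*m : ℕ) - (k : ℝ)) * γc k)
        / (C * ℓ (H*m) * ((H*m : ℕ) : ℝ) ^ (2*d + 1) * ((2 : ℝ) ^ (2*d) - 1)
            / (d * (2*d + 1))))
      atTop (nhds 1) := by
  set M := C * ((2 * d + 1) / (4 * d)) * (2 ^ (2 * d) - 1) / (d * (2 * d + 1))
  have hM : M ≠ 0 := by
    have h2 : (1 : ℝ) < 2 ^ (2 * d) := one_lt_rpow one_lt_two (by positivity)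
    exact (div_pos (mul_pos (by positivity) (sub_pos.2 h2)) (by positivity)).ne'
  have hden : Tendsto (fun n : ℕ ↦ C * ℓ n * (n : ℝ) ^ (2 * d + 1) * (2 ^ (2 * d) - 1)
      / (d * (2 * d + 1)) / (n : ℝ) ^ (2 * d + 1)) atTop (𝓝 M) := by
    refine (((hℓ.const_mul C).mul_const _).div_const _).congr' ?_
    filter_upwards [eventually_gt_atTop 0] with n hn
    field_simp [(rpow_pos_of_pos (Nat.cast_pos.2 hn) (2 * d + 1)).ne']
  have hHm : Tendsto (· * m) atTop atTop :=
    tendsto_atTop_mono (fun H ↦ Nat.le_mul_of_pos_right H hm) tendsto_id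
  have hlim := ((tendsto_triangleSum_div_rpow hd1 hℓ hγ).div hden hM).comp hHm
  rw [div_self hM] at hlim
  refine hlim.congr' ?_
  filter_upwards [eventually_gt_atTop 0] with H hH
  have hpow : ((H * m : ℕ) : ℝ) ^ (2 * d + 1) ≠ 0 :=
    (rpow_pos_of_pos (Nat.cast_pos.2 (Nat.mul_pos hH hm)) _).ne'
  simp only [Function.comp_apply, Pi.div_apply, div_div_div_cancel_right₀ hpow, triangleSum,
    Nat.mul_assoc]

/-- For `γ_c(k) = C ℓ(k) k^{2d-1}` with `0 < d < 1/2`, `C > 0` and `ℓ`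
slowly varying with limit `(2d+1)/(4d)`, the weighted sum
`S(H) = Σ_{k=1}^{Hm} k γ_c(k) + Σ_{k=Hm+1}^{2Hm-1} (2Hm - k) γ_c(k)` satisfies
`S(H) ∼ C ℓ(Hm) (Hm)^{2d+1} (2^{2d} - 1) / (d(2d+1))` as `H → ∞`. -/
theorem aggregated_cross_covariance_asymptotic
    (C d : ℝ) (hd1 : 0 < d) (hd2 : d < 1/2) (hC : 0 < C)
    (m : ℕ) (hm : 0 < m)
    (ℓ : ℕ → ℝ) (hℓ : Tendsto ℓ atTop (nhds ((2*d+1)/(4*d))))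
    (γc : ℕ → ℝ)
    (hγ : ∀ k : ℕ, 1 ≤ k → γc k = C * ℓ k * (k : ℝ) ^ (2*d - 1)) :
    Tendsto (fun H : ℕ =>
        ((∑ k ∈ Finset.Icc 1 (H*m), (k : ℝ) * γc k)
          + ∑ k ∈ Finset.Icc (H*m+1) (2*H*m-1), ((2*H*m : ℕ) - (k : ℝ)) * γc k)
        / (C * ℓ (H*m) * ((H*m : ℕ) : ℝ) ^ (2*d + 1) * ((2 : ℝ) ^ (2*d) - 1)
            / (d * (2*d + 1))))
      atTop (nhds 1) :=
  aggregated_cross_covariance_asymptotic_general C d hd1 hC m hm ℓ hℓ γc hγ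
end
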